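/- Soundness of BATC with static localities modulo static location pomset bisimilarity: if x and y are BATC with static localities terms and BATC^sl ⊢ x = y, then x ~p^sl y. -/

import Mathlib

/-!
BATC/APTC with static localities: syntax, location-decorated operational
semantics, static location truly concurrent bisimulations (strong and rooted
branching; step, pomset, hp- and hhp-) and the equational theories
BATC^sl, APTC^sl, with linear/guarded recursion, projection, silent step,
abstraction and CFAR, following "Truly Concurrent Process Algebra with
Localities".
-/

namespace APTCsl

/-- Atomic locations. -/
abbrev Loc : Type := ℕ

/-- Location strings `u, v ∈ Loc*` (`[]` is the empty location `ε`). -/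
abbrev LocSeq : Type := List Loc

/-- Atomic events, including the silent step `τ`. -/
inductive Evt where
  | tau : Evt
  | e : ℕ → Evt
deriving DecidableEq

/-- The ambient data of APTC: the communication function `γ`, the causal order
`≤` and the conflict relation `♯` on atomic events. -/
structure Ctx where
  gamma : Evt → Evt → Option Evt
  cle : Evt → Evt → Prop
  cfl : Evt → Evt → Prop

/-- Terms of (the various extensions of) APTC with static localities. -/
inductive Tm where
  | evt : Evt → Tm                 -- atomic event (including τ)
  | delta : Tm                     -- deadlock δ
  | var : ℕ → Tm                   -- recursion variable Xᵢ
  | plus : Tm → Tm → Tm            -- alternative composition +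
  | seq : Tm → Tm → Tm             -- sequential composition ·
  | loc : LocSeq → Tm → Tm         -- location prefix u::t
  | between : Tm → Tm → Tm         -- whole parallel composition ≬
  | par : Tm → Tm → Tm             -- parallel operator ∥
  | lmerge : Tm → Tm → Tm          -- left merge ⌊
  | comm : Tm → Tm → Tm            -- communication merge ∣
  | theta : Tm → Tm                -- conflict elimination Θ
  | unl : Tm → Tm → Tm             -- unless ◁
  | proj : ℕ → Tm → Tm             -- projection Πₙ
  | abst : Set Evt → Tm → Tm       -- abstraction τ_I
  | recs : (ℕ → Tm) → ℕ → Tm       -- recursion constant ⟨Xᵢ | E⟩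

instance : Inhabited Tm := ⟨.delta⟩

/-- Transition labels: a (multi)set of events, each with the location where it
is performed. A single event is a singleton list. -/
abbrev Lab : Type := List (Evt × LocSeq)

/-- States: `some t` is a term, `none` is the terminated state `√`. -/
abbrev S : Type := Option Tm

/-- Simultaneous substitution for recursion variables (recursion constants
bind the variables of their specification). -/
def subst (σ : ℕ → Tm) : Tm → Tm
  | .evt a => .evt a
  | .delta => .delta
  | .var X => σ X
  | .plus t s => .plus (subst σ t) (subst σ s)
  | .seq t s => .seq (subst σ t) (subst σ s)
  | .loc u t => .loc u (subst σ t)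
  | .between t s => .between (subst σ t) (subst σ s)
  | .par t s => .par (subst σ t) (subst σ s)
  | .lmerge t s => .lmerge (subst σ t) (subst σ s)
  | .comm t s => .comm (subst σ t) (subst σ s)
  | .theta t => .theta (subst σ t)
  | .unl t s => .unl (subst σ t) (subst σ s)
  | .proj n t => .proj n (subst σ t)
  | .abst I t => .abst I (subst σ t)
  | .recs E i => .recs E i

open Classical in
/-- Action of the abstraction operator `τ_I` on labelled events: events in `I`
become silent. -/
noncomputable def abstLab (I : Set Evt) (p : Evt × LocSeq) : Evt × LocSeq :=
  if p.1 ∈ I then (Evt.tau, ([] : LocSeq)) else p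

/-- The term-deduction system of APTC with static localities (with projection,
abstraction and guarded recursion), parameterized by a predicate `cd` used for
the negative premises of the unless operator `◁`. -/
inductive TA (C : Ctx) (cd : Tm → Evt → Prop) : Tm → Lab → S → Prop where
  | evt (a : Evt) : TA C cd (.evt a) [(a, [])] none
  | loc {t : Tm} {l : Lab} {r : S} (u : LocSeq) :
      TA C cd t l r →
      TA C cd (.loc u t) (l.map fun p => (p.1, u ++ p.2)) (r.map (Tm.loc u))
  | plusL {t : Tm} {l : Lab} {r : S} (s : Tm) :
      TA C cd t l r → TA C cd (.plus t s) l r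
  | plusR {s : Tm} {l : Lab} {r : S} (t : Tm) :
      TA C cd s l r → TA C cd (.plus t s) l r
  | seqN {t : Tm} {l : Lab} (s : Tm) :
      TA C cd t l none → TA C cd (.seq t s) l (some s)
  | seqS {t t' : Tm} {l : Lab} (s : Tm) :
      TA C cd t l (some t') → TA C cd (.seq t s) l (some (.seq t' s))
  | parNN {x y : Tm} {e₁ e₂ : Evt} {u v : LocSeq} :
      TA C cd x [(e₁, u)] none → TA C cd y [(e₂, v)] none →
      TA C cd (.par x y) [(e₁, u), (e₂, v)] none
  | parSN {x x' y : Tm} {e₁ e₂ : Evt} {u v : LocSeq} :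
      TA C cd x [(e₁, u)] (some x') → TA C cd y [(e₂, v)] none →
      TA C cd (.par x y) [(e₁, u), (e₂, v)] (some x')
  | parNS {x y y' : Tm} {e₁ e₂ : Evt} {u v : LocSeq} :
      TA C cd x [(e₁, u)] none → TA C cd y [(e₂, v)] (some y') →
      TA C cd (.par x y) [(e₁, u), (e₂, v)] (some y')
  | parSS {x x' y y' : Tm} {e₁ e₂ : Evt} {u v : LocSeq} :
      TA C cd x [(e₁, u)] (some x') → TA C cd y [(e₂, v)] (some y') →
      TA C cd (.par x y) [(e₁, u), (e₂, v)] (some (.between x' y'))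
  | lmNN {x y : Tm} {e₁ e₂ : Evt} {u v : LocSeq} :
      TA C cd x [(e₁, u)] none → TA C cd y [(e₂, v)] none → C.cle e₁ e₂ →
      TA C cd (.lmerge x y) [(e₁, u), (e₂, v)] none
  | lmSN {x x' y : Tm} {e₁ e₂ : Evt} {u v : LocSeq} :
      TA C cd x [(e₁, u)] (some x') → TA C cd y [(e₂, v)] none → C.cle e₁ e₂ →
      TA C cd (.lmerge x y) [(e₁, u), (e₂, v)] (some x')
  | lmNS {x y y' : Tm} {e₁ e₂ : Evt} {u v : LocSeq} :
      TA C cd x [(e₁, u)] none → TA C cd y [(e₂, v)] (some y') → C.cle e₁ e₂ →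
      TA C cd (.lmerge x y) [(e₁, u), (e₂, v)] (some y')
  | lmSS {x x' y y' : Tm} {e₁ e₂ : Evt} {u v : LocSeq} :
      TA C cd x [(e₁, u)] (some x') → TA C cd y [(e₂, v)] (some y') → C.cle e₁ e₂ →
      TA C cd (.lmerge x y) [(e₁, u), (e₂, v)] (some (.between x' y'))
  | commNN {x y : Tm} {e₁ e₂ e : Evt} {u v : LocSeq} :
      TA C cd x [(e₁, u)] none → TA C cd y [(e₂, v)] none →
      C.gamma e₁ e₂ = some e →
      TA C cd (.comm x y) [(e, u ++ v)] none
  | commSN {x x' y : Tm} {e₁ e₂ e : Evt} {u v : LocSeq} :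
      TA C cd x [(e₁, u)] (some x') → TA C cd y [(e₂, v)] none →
      C.gamma e₁ e₂ = some e →
      TA C cd (.comm x y) [(e, u ++ v)] (some x')
  | commNS {x y y' : Tm} {e₁ e₂ e : Evt} {u v : LocSeq} :
      TA C cd x [(e₁, u)] none → TA C cd y [(e₂, v)] (some y') →
      C.gamma e₁ e₂ = some e →
      TA C cd (.comm x y) [(e, u ++ v)] (some y')
  | commSS {x x' y y' : Tm} {e₁ e₂ e : Evt} {u v : LocSeq} :
      TA C cd x [(e₁, u)] (some x') → TA C cd y [(e₂, v)] (some y') →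
      C.gamma e₁ e₂ = some e →
      TA C cd (.comm x y) [(e, u ++ v)] (some (.between x' y'))
  | betw {x y : Tm} {l : Lab} {r : S} :
      TA C cd (.plus (.par x y) (.comm x y)) l r →
      TA C cd (.between x y) l r
  | theta₁ {x : Tm} {r : S} {e₁ e₂ : Evt} {u : LocSeq} :
      TA C cd x [(e₁, u)] r → C.cfl e₁ e₂ →
      TA C cd (.theta x) [(e₁, u)] (r.map Tm.theta)
  | theta₂ {x : Tm} {r : S} {e₁ e₂ : Evt} {u : LocSeq} :
      TA C cd x [(e₂, u)] r → C.cfl e₁ e₂ →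
      TA C cd (.theta x) [(e₂, u)] (r.map Tm.theta)
  | unl₁ {x y : Tm} {r : S} {e₁ e₂ : Evt} {u : LocSeq} :
      TA C cd x [(e₁, u)] r → ¬ cd y e₂ → C.cfl e₁ e₂ →
      TA C cd (.unl x y) [(Evt.tau, u)] r
  | unl₂ {x y : Tm} {r : S} {e₁ e₂ e₃ : Evt} {u : LocSeq} :
      TA C cd x [(e₁, u)] r → ¬ cd y e₃ → C.cfl e₁ e₂ → C.cle e₂ e₃ →
      TA C cd (.unl x y) [(e₁, u)] r
  | unl₃ {x y : Tm} {r : S} {e₁ e₂ e₃ : Evt} {u : LocSeq} :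
      TA C cd x [(e₃, u)] r → ¬ cd y e₂ → C.cfl e₁ e₂ → C.cle e₁ e₃ →
      TA C cd (.unl x y) [(Evt.tau, u)] r
  | projN {x : Tm} {l : Lab} (n : ℕ) :
      TA C cd x l none → TA C cd (.proj (n + 1) x) l none
  | projS {x x' : Tm} {l : Lab} (n : ℕ) :
      TA C cd x l (some x') → TA C cd (.proj (n + 1) x) l (some (.proj n x'))
  | abst {x : Tm} {l : Lab} {r : S} (I : Set Evt) :
      TA C cd x l r →
      TA C cd (.abst I x) (l.map (abstLab I)) (r.map (Tm.abst I))
  | recr {E : ℕ → Tm} {i : ℕ} {l : Lab} {r : S} :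
      TA C cd (subst (fun j => Tm.recs E j) (E i)) l r →
      TA C cd (.recs E i) l r

/-- `t` can perform the event `e` (used for the negative premises of `◁`). -/
def CanDo0 (C : Ctx) (t : Tm) (e : Evt) : Prop :=
  ∃ u r, TA C (fun _ _ => False) t [(e, u)] r

/-- The labelled transition relation of APTC with static localities. -/
def Trans (C : Ctx) : Tm → Lab → S → Prop :=
  TA C (CanDo0 C)

/-- The transition relation on states (`√` has no transitions). -/
def STrans (C : Ctx) : S → Lab → S → Prop := fun s l r =>
  ∃ t, s = some t ∧ Trans C t l r

/-- Location associations. -/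
abbrev Cla : Type := Set (LocSeq × LocSeq)

/-- Two location strings are independent (`u ⋄ v`) when neither is an
extension (sublocation) of the other. -/
def indep (u v : LocSeq) : Prop := ¬ u <+: v ∧ ¬ v <+: u

/-- A consistent location association. -/
def Consistent (φ : Cla) : Prop :=
  ∀ p ∈ φ, ∀ q ∈ φ, (indep p.1 q.1 ↔ indep p.2 q.2)

/-- Extend a location association `φ` by the pairs of locations of two matched
transition labels (matched componentwise). -/
def extend (φ : Cla) (l₁ l₂ : Lab) : Cla :=
  φ ∪ { p | ∃ (i : ℕ) (x y : Evt × LocSeq),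
    l₁[i]? = some x ∧ l₂[i]? = some y ∧ p = (x.2, y.2) }

/-- `R` is a strong static location step bisimulation: a family of relations
indexed by consistent location associations, matching step transitions up to
isomorphism of the steps, matching termination, and extending the association
by the pair of locations of the matched transitions. -/
def IsStepBisim (C : Ctx) (R : Cla → S → S → Prop) : Prop :=
  ∀ φ P Q, R φ P Q → Consistent φ ∧ (P = none ↔ Q = none) ∧
    (∀ l₁ P', STrans C P l₁ P' →
      ∃ l₂ l₂' Q', STrans C Q l₂ Q' ∧ List.Perm l₂ l₂' ∧
        l₁.map Prod.fst = l₂'.map Prod.fst ∧ R (extend φ l₁ l₂') P' Q') ∧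
    (∀ l₂ Q', STrans C Q l₂ Q' →
      ∃ l₁ l₁' P', STrans C P l₁ P' ∧ List.Perm l₁ l₁' ∧
        l₂.map Prod.fst = l₁'.map Prod.fst ∧ R (extend φ l₁' l₂) P' Q')

/-- Strong static location step bisimilarity `p ∼ₛˢˡ q`. -/
def stepBisim (C : Ctx) (p q : Tm) : Prop :=
  ∃ R, IsStepBisim C R ∧ R ∅ (some p) (some q)

/-- `R` is a strong static location pomset bisimulation (transitions matched
up to pomset isomorphism). -/
def IsPomBisim (C : Ctx) (R : Cla → S → S → Prop) : Prop :=
  ∀ φ P Q, R φ P Q → Consistent φ ∧ (P = none ↔ Q = none) ∧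
    (∀ l₁ P', STrans C P l₁ P' →
      ∃ l₂ l₂' Q', STrans C Q l₂ Q' ∧ List.Perm l₂ l₂' ∧
        l₁.map Prod.fst = l₂'.map Prod.fst ∧ R (extend φ l₁ l₂') P' Q') ∧
    (∀ l₂ Q', STrans C Q l₂ Q' →
      ∃ l₁ l₁' P', STrans C P l₁ P' ∧ List.Perm l₁ l₁' ∧
        l₂.map Prod.fst = l₁'.map Prod.fst ∧ R (extend φ l₁' l₂) P' Q')

/-- Strong static location pomset bisimilarity `p ∼ₚˢˡ q`. -/
def pomBisim (C : Ctx) (p q : Tm) : Prop :=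
  ∃ R, IsPomBisim C R ∧ R ∅ (some p) (some q)

/-- Events with locations. -/
abbrev Ev : Type := Evt × LocSeq

/-- Histories of matched pairs of events (the label-preserving order
isomorphism of the posetal product, listed in causal order). -/
abbrev Hist : Type := List (Ev × Ev)

/-- Runs through the LTS, possibly interleaved with (recorded or unrecorded)
silent steps. -/
inductive RunW (C : Ctx) : S → List Ev → S → Prop where
  | refl (s : S) : RunW C s [] s
  | step {s s' s'' : S} {e : Evt} {u : LocSeq} {tr : List Ev} :
      STrans C s [(e, u)] s' → RunW C s' tr s'' → RunW C s ((e, u) :: tr) s''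
  | skip {s s' : S} {tr : List Ev} :
      RunW C s tr s' → RunW C s ((Evt.tau, ([] : LocSeq)) :: tr) s'
  | tauStep {s s' s'' : S} {u : LocSeq} {tr : List Ev} :
      STrans C s [(Evt.tau, u)] s' → RunW C s' tr s'' → RunW C s tr s''

/-- `R` is a strong static location history-preserving (hp-) bisimulation: a
family of posetal relations (configurations together with a label-preserving
isomorphism, here recorded as the history of matched events) indexed by
consistent location associations, matching single-event transitions. -/
def IsHpBisim (C : Ctx) (R : Cla → S → Hist → S → Prop) : Prop :=
  ∀ φ P h Q, R φ P h Q → Consistent φ ∧ (∀ pr ∈ h, pr.1.1 = pr.2.1) ∧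
    (P = none ↔ Q = none) ∧
    (∀ e u P', STrans C P [(e, u)] P' →
      ∃ v Q', STrans C Q [(e, v)] Q' ∧
        R (insert (u, v) φ) P' (h ++ [((e, u), (e, v))]) Q') ∧
    (∀ e v Q', STrans C Q [(e, v)] Q' →
      ∃ u P', STrans C P [(e, u)] P' ∧
        R (insert (u, v) φ) P' (h ++ [((e, u), (e, v))]) Q')

/-- Strong static location hp-bisimilarity `p ∼ₕₚˢˡ q`. -/
def hpBisim (C : Ctx) (p q : Tm) : Prop :=
  ∃ R, IsHpBisim C R ∧ R ∅ (some p) [] (some q)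

/-- Downward closure of a posetal relation: every pointwise-smaller pair of
configurations (a prefix of the history, with intermediate states witnessing
the runs, and a smaller location association) is again related. -/
def DownClosed (C : Ctx) (R : Cla → S → Hist → S → Prop) : Prop :=
  ∀ φ P h₁ h₂ Q, R φ P (h₁ ++ h₂) Q → ∀ φ' ⊆ φ,
    ∃ P₁ Q₁, R φ' P₁ h₁ Q₁ ∧
      RunW C P₁ (h₂.map Prod.fst) P ∧ RunW C Q₁ (h₂.map Prod.snd) Q

/-- Strong static location hereditary history-preserving (hhp-) bisimilarity:
a downward closed hp-bisimulation. -/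
def hhpBisim (C : Ctx) (p q : Tm) : Prop :=
  ∃ R, IsHpBisim C R ∧ DownClosed C R ∧ R ∅ (some p) [] (some q)

/-- A (possibly empty) sequence of silent steps. -/
def TauSeq (C : Ctx) : S → S → Prop :=
  Relation.ReflTransGen (fun a b => ∃ u, STrans C a [(Evt.tau, u)] b)

/-- Weak transitions `τ* l τ*` on states. -/
def WSTrans (C : Ctx) (P : S) (l : Lab) (P' : S) : Prop :=
  ∃ P₁ P₂, TauSeq C P P₁ ∧ STrans C P₁ l P₂ ∧ TauSeq C P₂ P'

/-- `R` is a branching static location step bisimulation. -/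
def IsBrStepBisim (C : Ctx) (R : Cla → S → S → Prop) : Prop :=
  ∀ φ P Q, R φ P Q → Consistent φ ∧
    (∀ l P', STrans C P l P' →
      ((∀ p ∈ l, p.1 = Evt.tau) ∧ R φ P' Q) ∨
      (∃ Q₀ l₂ l₂' Q', TauSeq C Q Q₀ ∧ R φ P Q₀ ∧ WSTrans C Q₀ l₂ Q' ∧
        List.Perm l₂ l₂' ∧ l.map Prod.fst = l₂'.map Prod.fst ∧
        R (extend φ l l₂') P' Q')) ∧
    (∀ l Q', STrans C Q l Q' →
      ((∀ p ∈ l, p.1 = Evt.tau) ∧ R φ P Q') ∨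
      (∃ P₀ l₁ l₁' P', TauSeq C P P₀ ∧ R φ P₀ Q ∧ WSTrans C P₀ l₁ P' ∧
        List.Perm l₁ l₁' ∧ l.map Prod.fst = l₁'.map Prod.fst ∧
        R (extend φ l₁' l) P' Q')) ∧
    (P = none → ∃ Q₀, TauSeq C Q Q₀ ∧ R φ P Q₀ ∧ Q₀ = none) ∧
    (Q = none → ∃ P₀, TauSeq C P P₀ ∧ R φ P₀ Q ∧ P₀ = none)

/-- Branching static location step bisimilarity `≈_{bs}^{sl}`. -/
def brStepBisim (C : Ctx) (P Q : S) : Prop :=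
  ∃ R, IsBrStepBisim C R ∧ R ∅ P Q

/-- Rooted branching static location step bisimilarity `≈_{rbs}^{sl}`:
initial transitions are matched directly, with branching bisimilar
successors. -/
def rbStepBisim (C : Ctx) (p q : Tm) : Prop :=
  (∀ l P', STrans C (some p) l P' →
    ∃ l₂ l₂' Q', STrans C (some q) l₂ Q' ∧ List.Perm l₂ l₂' ∧
      l.map Prod.fst = l₂'.map Prod.fst ∧ brStepBisim C P' Q') ∧
  (∀ l Q', STrans C (some q) l Q' →
    ∃ l₁ l₁' P', STrans C (some p) l₁ P' ∧ List.Perm l₁ l₁' ∧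
      l.map Prod.fst = l₁'.map Prod.fst ∧ brStepBisim C P' Q')

/-- `R` is a branching static location pomset bisimulation. -/
def IsBrPomBisim (C : Ctx) (R : Cla → S → S → Prop) : Prop :=
  ∀ φ P Q, R φ P Q → Consistent φ ∧
    (∀ l P', STrans C P l P' →
      ((∀ p ∈ l, p.1 = Evt.tau) ∧ R φ P' Q) ∨
      (∃ Q₀ l₂ l₂' Q', TauSeq C Q Q₀ ∧ R φ P Q₀ ∧ WSTrans C Q₀ l₂ Q' ∧
        List.Perm l₂ l₂' ∧ l.map Prod.fst = l₂'.map Prod.fst ∧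
        R (extend φ l l₂') P' Q')) ∧
    (∀ l Q', STrans C Q l Q' →
      ((∀ p ∈ l, p.1 = Evt.tau) ∧ R φ P Q') ∨
      (∃ P₀ l₁ l₁' P', TauSeq C P P₀ ∧ R φ P₀ Q ∧ WSTrans C P₀ l₁ P' ∧
        List.Perm l₁ l₁' ∧ l.map Prod.fst = l₁'.map Prod.fst ∧
        R (extend φ l₁' l) P' Q')) ∧
    (P = none → ∃ Q₀, TauSeq C Q Q₀ ∧ R φ P Q₀ ∧ Q₀ = none) ∧
    (Q = none → ∃ P₀, TauSeq C P P₀ ∧ R φ P₀ Q ∧ P₀ = none)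

/-- Branching static location pomset bisimilarity `≈_{bp}^{sl}`. -/
def brPomBisim (C : Ctx) (P Q : S) : Prop :=
  ∃ R, IsBrPomBisim C R ∧ R ∅ P Q

/-- Rooted branching static location pomset bisimilarity `≈_{rbp}^{sl}`. -/
def rbPomBisim (C : Ctx) (p q : Tm) : Prop :=
  (∀ l P', STrans C (some p) l P' →
    ∃ l₂ l₂' Q', STrans C (some q) l₂ Q' ∧ List.Perm l₂ l₂' ∧
      l.map Prod.fst = l₂'.map Prod.fst ∧ brPomBisim C P' Q') ∧
  (∀ l Q', STrans C (some q) l Q' →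
    ∃ l₁ l₁' P', STrans C (some p) l₁ P' ∧ List.Perm l₁ l₁' ∧
      l.map Prod.fst = l₁'.map Prod.fst ∧ brPomBisim C P' Q')

/-- `R` is a branching static location hp-bisimulation (a posetal relation
with the branching matching conditions; skipped silent events are recorded as
mapped to `τ`). -/
def IsBrHpBisim (C : Ctx) (R : Cla → S → Hist → S → Prop) : Prop :=
  ∀ φ P h Q, R φ P h Q → Consistent φ ∧
    (∀ pr ∈ h, pr.1.1 = pr.2.1 ∨ pr.1.1 = Evt.tau ∨ pr.2.1 = Evt.tau) ∧
    (∀ e u P', STrans C P [(e, u)] P' →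
      (e = Evt.tau ∧ R φ P' (h ++ [((e, u), (Evt.tau, []))]) Q) ∨
      (∃ Q₀ v Q', TauSeq C Q Q₀ ∧ R φ P h Q₀ ∧ STrans C Q₀ [(e, v)] Q' ∧
        R (insert (u, v) φ) P' (h ++ [((e, u), (e, v))]) Q')) ∧
    (∀ e v Q', STrans C Q [(e, v)] Q' →
      (e = Evt.tau ∧ R φ P (h ++ [((Evt.tau, []), (e, v))]) Q') ∨
      (∃ P₀ u P', TauSeq C P P₀ ∧ R φ P₀ h Q ∧ STrans C P₀ [(e, u)] P' ∧
        R (insert (u, v) φ) P' (h ++ [((e, u), (e, v))]) Q')) ∧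
    (P = none → ∃ Q₀, TauSeq C Q Q₀ ∧ R φ P h Q₀ ∧ Q₀ = none) ∧
    (Q = none → ∃ P₀, TauSeq C P P₀ ∧ R φ P₀ h Q ∧ P₀ = none)

/-- Branching static location hp-bisimilarity `≈_{bhp}^{sl}`. -/
def brHpBisim (C : Ctx) (P Q : S) : Prop :=
  ∃ R, IsBrHpBisim C R ∧ R ∅ P [] Q

/-- Branching static location hhp-bisimilarity `≈_{bhhp}^{sl}` (a downward
closed branching hp-bisimulation). -/
def brHhpBisim (C : Ctx) (P Q : S) : Prop :=
  ∃ R, IsBrHpBisim C R ∧ DownClosed C R ∧ R ∅ P [] Q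

/-- Rooted branching static location hp-bisimilarity `≈_{rbhp}^{sl}`. -/
def rbHpBisim (C : Ctx) (p q : Tm) : Prop :=
  (∀ e u P', STrans C (some p) [(e, u)] P' →
    ∃ v Q', STrans C (some q) [(e, v)] Q' ∧ brHpBisim C P' Q') ∧
  (∀ e v Q', STrans C (some q) [(e, v)] Q' →
    ∃ u P', STrans C (some p) [(e, u)] P' ∧ brHpBisim C P' Q')

/-- Rooted branching static location hhp-bisimilarity `≈_{rbhhp}^{sl}`. -/
def rbHhpBisim (C : Ctx) (p q : Tm) : Prop :=
  (∀ e u P', STrans C (some p) [(e, u)] P' →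
    ∃ v Q', STrans C (some q) [(e, v)] Q' ∧ brHhpBisim C P' Q') ∧
  (∀ e v Q', STrans C (some q) [(e, v)] Q' →
    ∃ u P', STrans C (some p) [(e, u)] P' ∧ brHhpBisim C P' Q')

/-! ### Term classes, basic terms and the equational theories -/

/-- BATC with static localities terms: atomic events, `+`, `·` and location
prefix (all such terms are closed). -/
inductive IsB : Tm → Prop where
  | evt (a : Evt) : IsB (.evt a)
  | plus {t s : Tm} : IsB t → IsB s → IsB (.plus t s)
  | seq {t s : Tm} : IsB t → IsB s → IsB (.seq t s)
  | loc {t : Tm} (u : LocSeq) : IsB t → IsB (.loc u t)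

/-- Basic terms of BATC with static localities. -/
inductive BasicB : Tm → Prop where
  | evt (a : Evt) : BasicB (.evt a)
  | loc {t : Tm} (u : LocSeq) : BasicB t → BasicB (.loc u t)
  | seq {t : Tm} (a : Evt) : BasicB t → BasicB (.seq (.evt a) t)
  | plus {t s : Tm} : BasicB t → BasicB s → BasicB (.plus t s)

/-- APTC with static localities terms (no recursion, projection or
abstraction; all such terms are closed). -/
inductive IsA : Tm → Prop where
  | evt (a : Evt) : IsA (.evt a)
  | delta : IsA .delta
  | plus {t s : Tm} : IsA t → IsA s → IsA (.plus t s)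
  | seq {t s : Tm} : IsA t → IsA s → IsA (.seq t s)
  | loc {t : Tm} (u : LocSeq) : IsA t → IsA (.loc u t)
  | between {t s : Tm} : IsA t → IsA s → IsA (.between t s)
  | par {t s : Tm} : IsA t → IsA s → IsA (.par t s)
  | lmerge {t s : Tm} : IsA t → IsA s → IsA (.lmerge t s)
  | comm {t s : Tm} : IsA t → IsA s → IsA (.comm t s)
  | theta {t : Tm} : IsA t → IsA (.theta t)
  | unl {t s : Tm} : IsA t → IsA s → IsA (.unl t s)

/-- Basic terms of APTC with static localities. -/
inductive BasicA : Tm → Prop where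
  | evt (a : Evt) : BasicA (.evt a)
  | delta : BasicA .delta
  | loc {t : Tm} (u : LocSeq) : BasicA t → BasicA (.loc u t)
  | seq {t : Tm} (a : Evt) : BasicA t → BasicA (.seq (.evt a) t)
  | plus {t s : Tm} : BasicA t → BasicA s → BasicA (.plus t s)
  | lmerge {t s : Tm} : BasicA t → BasicA s → BasicA (.lmerge t s)

/-- Terms of the form `u₁::a₁ ⌊ ⋯ ⌊ uₘ::aₘ`. -/
inductive MergeTm : Tm → Prop where
  | base (u : LocSeq) (a : Evt) : MergeTm (.loc u (.evt a))
  | cons (u : LocSeq) (a : Evt) {t : Tm} :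
      MergeTm t → MergeTm (.lmerge (.loc u (.evt a)) t)

/-- Terms of the form `e₁ ⌊ ⋯ ⌊ eₖ` (plain events). -/
inductive EvMerge : Tm → Prop where
  | base (a : Evt) : EvMerge (.evt a)
  | cons (a : Evt) {t : Tm} : EvMerge t → EvMerge (.lmerge (.evt a) t)

/-- Bodies of linear recursive specifications: sums of summands
`(u₁::a₁ ⌊ ⋯ ⌊ uₘ::aₘ)·Xⱼ` and `v₁::b₁ ⌊ ⋯ ⌊ vₙ::bₙ` (the empty sum is `δ`). -/
inductive LinTm : Tm → Prop where
  | delta : LinTm .delta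
  | exit {t : Tm} : MergeTm t → LinTm t
  | step {t : Tm} (j : ℕ) : MergeTm t → LinTm (.seq t (.var j))
  | plus {t s : Tm} : LinTm t → LinTm s → LinTm (.plus t s)

/-- A linear recursive specification. -/
def Linear (E : ℕ → Tm) : Prop := ∀ i, LinTm (E i)

/-- Bodies of guarded recursive specifications: sums of summands
`(u₁::a₁ ⌊ ⋯ ⌊ uₘ::aₘ)·s(X₁,…,Xₙ)` and `v₁::b₁ ⌊ ⋯ ⌊ vₙ::bₙ`. -/
inductive GBody : Tm → Prop where
  | delta : GBody .delta
  | exit {t : Tm} : MergeTm t → GBody t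
  | step {t : Tm} (s : Tm) : MergeTm t → GBody (.seq t s)
  | plus {t s : Tm} : GBody t → GBody s → GBody (.plus t s)

/-- The axioms A1–A5 and L1–L4 of BATC with static localities. -/
inductive AxB : Tm → Tm → Prop where
  | A1 (x y : Tm) : AxB (.plus x y) (.plus y x)
  | A2 (x y z : Tm) : AxB (.plus (.plus x y) z) (.plus x (.plus y z))
  | A3 (x : Tm) : AxB (.plus x x) x
  | A4 (x y z : Tm) : AxB (.seq (.plus x y) z) (.plus (.seq x z) (.seq y z))
  | A5 (x y z : Tm) : AxB (.seq (.seq x y) z) (.seq x (.seq y z))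
  | L1 (x : Tm) : AxB (.loc [] x) x
  | L2 (u : LocSeq) (x y : Tm) :
      AxB (.loc u (.seq x y)) (.seq (.loc u x) (.loc u y))
  | L3 (u : LocSeq) (x y : Tm) :
      AxB (.loc u (.plus x y)) (.plus (.loc u x) (.loc u y))
  | L4 (u v : LocSeq) (x : Tm) : AxB (.loc u (.loc v x)) (.loc (u ++ v) x)

/-- `γ(e₁,e₂)` as a term (`δ` if the communication is undefined). -/
def gamTm (C : Ctx) (e₁ e₂ : Evt) : Tm :=
  match C.gamma e₁ e₂ with
  | some e => .evt e
  | none => .delta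

/-- The axioms A1–A7, P1–P9, C1–C8, CE1–CE6, U1–U13 and L1–L10 of APTC with
static localities. -/
inductive AxA (C : Ctx) : Tm → Tm → Prop where
  | A1 (x y : Tm) : AxA C (.plus x y) (.plus y x)
  | A2 (x y z : Tm) : AxA C (.plus (.plus x y) z) (.plus x (.plus y z))
  | A3 (x : Tm) : AxA C (.plus x x) x
  | A4 (x y z : Tm) : AxA C (.seq (.plus x y) z) (.plus (.seq x z) (.seq y z))
  | A5 (x y z : Tm) : AxA C (.seq (.seq x y) z) (.seq x (.seq y z))
  | A6 (x : Tm) : AxA C (.plus x .delta) x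
  | A7 (x : Tm) : AxA C (.seq .delta x) .delta
  | L1 (x : Tm) : AxA C (.loc [] x) x
  | L2 (u : LocSeq) (x y : Tm) :
      AxA C (.loc u (.seq x y)) (.seq (.loc u x) (.loc u y))
  | L3 (u : LocSeq) (x y : Tm) :
      AxA C (.loc u (.plus x y)) (.plus (.loc u x) (.loc u y))
  | L4 (u v : LocSeq) (x : Tm) : AxA C (.loc u (.loc v x)) (.loc (u ++ v) x)
  | P1 (x y : Tm) : AxA C (.between x y) (.plus (.par x y) (.comm x y))
  | P2 (x y : Tm) : AxA C (.par x y) (.par y x)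
  | P3 (x y z : Tm) : AxA C (.par (.par x y) z) (.par x (.par y z))
  | P4 (x y : Tm) : AxA C (.par x y) (.plus (.lmerge x y) (.lmerge y x))
  | P5 {e₁ e₂ : Evt} (y : Tm) : C.cle e₁ e₂ →
      AxA C (.lmerge (.evt e₁) (.seq (.evt e₂) y))
            (.seq (.lmerge (.evt e₁) (.evt e₂)) y)
  | P6 {e₁ e₂ : Evt} (x : Tm) : C.cle e₁ e₂ →
      AxA C (.lmerge (.seq (.evt e₁) x) (.evt e₂))
            (.seq (.lmerge (.evt e₁) (.evt e₂)) x)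
  | P7 {e₁ e₂ : Evt} (x y : Tm) : C.cle e₁ e₂ →
      AxA C (.lmerge (.seq (.evt e₁) x) (.seq (.evt e₂) y))
            (.seq (.lmerge (.evt e₁) (.evt e₂)) (.between x y))
  | P8 (x y z : Tm) :
      AxA C (.lmerge (.plus x y) z) (.plus (.lmerge x z) (.lmerge y z))
  | P9 (x : Tm) : AxA C (.lmerge .delta x) .delta
  | C1 (e₁ e₂ : Evt) : AxA C (.comm (.evt e₁) (.evt e₂)) (gamTm C e₁ e₂)
  | C2 (e₁ e₂ : Evt) (y : Tm) :
      AxA C (.comm (.evt e₁) (.seq (.evt e₂) y)) (.seq (gamTm C e₁ e₂) y)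
  | C3 (e₁ e₂ : Evt) (x : Tm) :
      AxA C (.comm (.seq (.evt e₁) x) (.evt e₂)) (.seq (gamTm C e₁ e₂) x)
  | C4 (e₁ e₂ : Evt) (x y : Tm) :
      AxA C (.comm (.seq (.evt e₁) x) (.seq (.evt e₂) y))
            (.seq (gamTm C e₁ e₂) (.between x y))
  | C5 (x y z : Tm) : AxA C (.comm (.plus x y) z) (.plus (.comm x z) (.comm y z))
  | C6 (x y z : Tm) : AxA C (.comm x (.plus y z)) (.plus (.comm x y) (.comm x z))
  | C7 (x : Tm) : AxA C (.comm .delta x) .delta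
  | C8 (x : Tm) : AxA C (.comm x .delta) .delta
  | CE1 (a : Evt) : AxA C (.theta (.evt a)) (.evt a)
  | CE2 : AxA C (.theta .delta) .delta
  | CE3 (x y : Tm) :
      AxA C (.theta (.plus x y)) (.plus (.unl (.theta x) y) (.unl (.theta y) x))
  | CE4 (x y : Tm) : AxA C (.theta (.seq x y)) (.seq (.theta x) (.theta y))
  | CE5 (x y : Tm) :
      AxA C (.theta (.par x y))
            (.plus (.par (.unl (.theta x) y) y) (.par (.unl (.theta y) x) x))
  | CE6 (x y : Tm) :
      AxA C (.theta (.comm x y))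
            (.plus (.comm (.unl (.theta x) y) y) (.comm (.unl (.theta y) x) x))
  | U1 {e₁ e₂ : Evt} : C.cfl e₁ e₂ →
      AxA C (.unl (.evt e₁) (.evt e₂)) (.evt Evt.tau)
  | U2 {e₁ e₂ e₃ : Evt} : C.cfl e₁ e₂ → C.cle e₂ e₃ →
      AxA C (.unl (.evt e₁) (.evt e₃)) (.evt e₁)
  | U3 {e₁ e₂ e₃ : Evt} : C.cfl e₁ e₂ → C.cle e₂ e₃ →
      AxA C (.unl (.evt e₃) (.evt e₁)) (.evt Evt.tau)
  | U4 (a : Evt) : AxA C (.unl (.evt a) .delta) (.evt a)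
  | U5 (a : Evt) : AxA C (.unl .delta (.evt a)) .delta
  | U6 (x y z : Tm) : AxA C (.unl (.plus x y) z) (.plus (.unl x z) (.unl y z))
  | U7 (x y z : Tm) : AxA C (.unl (.seq x y) z) (.seq (.unl x z) (.unl y z))
  | U8 (x y z : Tm) :
      AxA C (.unl (.lmerge x y) z) (.lmerge (.unl x z) (.unl y z))
  | U9 (x y z : Tm) : AxA C (.unl (.comm x y) z) (.comm (.unl x z) (.unl y z))
  | U10 (x y z : Tm) : AxA C (.unl x (.plus y z)) (.unl (.unl x y) z)
  | U11 (x y z : Tm) : AxA C (.unl x (.seq y z)) (.unl (.unl x y) z)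
  | U12 (x y z : Tm) : AxA C (.unl x (.lmerge y z)) (.unl (.unl x y) z)
  | U13 (x y z : Tm) : AxA C (.unl x (.comm y z)) (.unl (.unl x y) z)
  | L5 (u : LocSeq) (x y : Tm) :
      AxA C (.loc u (.between x y)) (.between (.loc u x) (.loc u y))
  | L6 (u : LocSeq) (x y : Tm) :
      AxA C (.loc u (.par x y)) (.par (.loc u x) (.loc u y))
  | L7 (u : LocSeq) (x y : Tm) :
      AxA C (.loc u (.comm x y)) (.comm (.loc u x) (.loc u y))
  | L8 (u : LocSeq) (x : Tm) : AxA C (.loc u (.theta x)) (.theta (.loc u x))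
  | L9 (u : LocSeq) (x y : Tm) :
      AxA C (.loc u (.unl x y)) (.unl (.loc u x) (.loc u y))
  | L10 (u : LocSeq) : AxA C (.loc u .delta) .delta

/-- Equational derivability from a set of axioms `Ax`: the least congruence
containing `Ax`, together with the Recursive Specification Principle (RSP)
for specifications satisfying the guard `G`. -/
inductive EqCl (Ax : Tm → Tm → Prop) (G : (ℕ → Tm) → Prop) : Tm → Tm → Prop where
  | ax {t s : Tm} : Ax t s → EqCl Ax G t s
  | refl (t : Tm) : EqCl Ax G t t
  | symm {t s : Tm} : EqCl Ax G t s → EqCl Ax G s t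
  | trans {t s r : Tm} : EqCl Ax G t s → EqCl Ax G s r → EqCl Ax G t r
  | plusC {t t' s s' : Tm} : EqCl Ax G t t' → EqCl Ax G s s' →
      EqCl Ax G (.plus t s) (.plus t' s')
  | seqC {t t' s s' : Tm} : EqCl Ax G t t' → EqCl Ax G s s' →
      EqCl Ax G (.seq t s) (.seq t' s')
  | locC (u : LocSeq) {t t' : Tm} : EqCl Ax G t t' →
      EqCl Ax G (.loc u t) (.loc u t')
  | betweenC {t t' s s' : Tm} : EqCl Ax G t t' → EqCl Ax G s s' →
      EqCl Ax G (.between t s) (.between t' s')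
  | parC {t t' s s' : Tm} : EqCl Ax G t t' → EqCl Ax G s s' →
      EqCl Ax G (.par t s) (.par t' s')
  | lmergeC {t t' s s' : Tm} : EqCl Ax G t t' → EqCl Ax G s s' →
      EqCl Ax G (.lmerge t s) (.lmerge t' s')
  | commC {t t' s s' : Tm} : EqCl Ax G t t' → EqCl Ax G s s' →
      EqCl Ax G (.comm t s) (.comm t' s')
  | thetaC {t t' : Tm} : EqCl Ax G t t' → EqCl Ax G (.theta t) (.theta t')
  | unlC {t t' s s' : Tm} : EqCl Ax G t t' → EqCl Ax G s s' →
      EqCl Ax G (.unl t s) (.unl t' s')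
  | projC (n : ℕ) {t t' : Tm} : EqCl Ax G t t' →
      EqCl Ax G (.proj n t) (.proj n t')
  | abstC (I : Set Evt) {t t' : Tm} : EqCl Ax G t t' →
      EqCl Ax G (.abst I t) (.abst I t')
  | rsp {E y : ℕ → Tm} (i : ℕ) : G E →
      (∀ j, EqCl Ax G (y j) (subst y (E j))) →
      EqCl Ax G (y i) (.recs E i)

/-- Derivability in BATC with static localities, `BATC^{sl} ⊢ t = s`. -/
def DerivB : Tm → Tm → Prop := EqCl AxB (fun _ => False)

/-- Derivability in APTC with static localities, `APTC^{sl} ⊢ t = s`. -/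
def DerivA (C : Ctx) : Tm → Tm → Prop := EqCl (AxA C) (fun _ => False)

/-- The axioms of APTC with static localities and linear recursion
(APTC^sl + RDP). -/
inductive AxR (C : Ctx) : Tm → Tm → Prop where
  | base {t s : Tm} : AxA C t s → AxR C t s
  | rdp {E : ℕ → Tm} (i : ℕ) : Linear E →
      AxR C (.recs E i) (subst (fun j => Tm.recs E j) (E i))

/-- Derivability in APTC with static localities and linear recursion
(with RDP and RSP). -/
def DerivR (C : Ctx) : Tm → Tm → Prop := EqCl (AxR C) Linear

/-- The axioms of APTC with static localities, linear recursion and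
projection (adding PR1–PR6 and L12). -/
inductive AxP (C : Ctx) : Tm → Tm → Prop where
  | base {t s : Tm} : AxR C t s → AxP C t s
  | PR1 (n : ℕ) (x y : Tm) :
      AxP C (.proj n (.plus x y)) (.plus (.proj n x) (.proj n y))
  | PR2 (n : ℕ) (x y : Tm) :
      AxP C (.proj n (.lmerge x y)) (.lmerge (.proj n x) (.proj n y))
  | PR3 (n : ℕ) {t : Tm} : EvMerge t → AxP C (.proj (n + 1) t) t
  | PR4 (n : ℕ) {t : Tm} (x : Tm) : EvMerge t →
      AxP C (.proj (n + 1) (.seq t x)) (.seq t (.proj n x))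
  | PR5 (x : Tm) : AxP C (.proj 0 x) .delta
  | PR6 (n : ℕ) : AxP C (.proj n .delta) .delta
  | L12 (u : LocSeq) (n : ℕ) (x : Tm) :
      AxP C (.loc u (.proj n x)) (.proj n (.loc u x))

/-- Derivability in APTC with static localities, linear recursion and
projection (with RDP, RSP, PR1–PR6 and L12). -/
def DerivP (C : Ctx) : Tm → Tm → Prop := EqCl (AxP C) Linear

/-- A guarded recursive specification: the right-hand sides can be adapted,
by derivable equalities, to the guarded shape `GBody`. -/
def GuardedSpec (C : Ctx) (E : ℕ → Tm) : Prop :=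
  ∀ i, ∃ t, GBody t ∧ DerivA C (E i) t

/-- A guarded linear recursive specification: linear and without infinite
`τ`-transition sequences `⟨X|E⟩ —τ→ ⟨X'|E⟩ —τ→ ⋯`. -/
def GuardedLin (C : Ctx) (E : ℕ → Tm) : Prop :=
  Linear E ∧
  ¬ ∃ g : ℕ → ℕ, ∀ n, ∃ u,
      Trans C (.recs E (g n)) [(Evt.tau, u)] (some (.recs E (g (n + 1))))

/-- Terms of APTC with static localities and linear recursion. -/
inductive IsAR : Tm → Prop where
  | evt (a : Evt) : IsAR (.evt a)
  | delta : IsAR .delta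
  | plus {t s : Tm} : IsAR t → IsAR s → IsAR (.plus t s)
  | seq {t s : Tm} : IsAR t → IsAR s → IsAR (.seq t s)
  | loc {t : Tm} (u : LocSeq) : IsAR t → IsAR (.loc u t)
  | between {t s : Tm} : IsAR t → IsAR s → IsAR (.between t s)
  | par {t s : Tm} : IsAR t → IsAR s → IsAR (.par t s)
  | lmerge {t s : Tm} : IsAR t → IsAR s → IsAR (.lmerge t s)
  | comm {t s : Tm} : IsAR t → IsAR s → IsAR (.comm t s)
  | theta {t : Tm} : IsAR t → IsAR (.theta t)
  | unl {t s : Tm} : IsAR t → IsAR s → IsAR (.unl t s)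
  | recs {E : ℕ → Tm} (i : ℕ) : Linear E → IsAR (.recs E i)

/-- Terms of APTC with static localities, linear recursion and projection. -/
inductive IsARP : Tm → Prop where
  | evt (a : Evt) : IsARP (.evt a)
  | delta : IsARP .delta
  | plus {t s : Tm} : IsARP t → IsARP s → IsARP (.plus t s)
  | seq {t s : Tm} : IsARP t → IsARP s → IsARP (.seq t s)
  | loc {t : Tm} (u : LocSeq) : IsARP t → IsARP (.loc u t)
  | between {t s : Tm} : IsARP t → IsARP s → IsARP (.between t s)
  | par {t s : Tm} : IsARP t → IsARP s → IsARP (.par t s)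
  | lmerge {t s : Tm} : IsARP t → IsARP s → IsARP (.lmerge t s)
  | comm {t s : Tm} : IsARP t → IsARP s → IsARP (.comm t s)
  | theta {t : Tm} : IsARP t → IsARP (.theta t)
  | unl {t s : Tm} : IsARP t → IsARP s → IsARP (.unl t s)
  | proj (n : ℕ) {t : Tm} : IsARP t → IsARP (.proj n t)
  | recs {E : ℕ → Tm} (i : ℕ) : Linear E → IsARP (.recs E i)

/-- Terms of APTC with static localities, projection and guarded recursion. -/
inductive IsGR (C : Ctx) : Tm → Prop where
  | evt (a : Evt) : IsGR C (.evt a)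
  | delta : IsGR C .delta
  | plus {t s : Tm} : IsGR C t → IsGR C s → IsGR C (.plus t s)
  | seq {t s : Tm} : IsGR C t → IsGR C s → IsGR C (.seq t s)
  | loc {t : Tm} (u : LocSeq) : IsGR C t → IsGR C (.loc u t)
  | between {t s : Tm} : IsGR C t → IsGR C s → IsGR C (.between t s)
  | par {t s : Tm} : IsGR C t → IsGR C s → IsGR C (.par t s)
  | lmerge {t s : Tm} : IsGR C t → IsGR C s → IsGR C (.lmerge t s)
  | comm {t s : Tm} : IsGR C t → IsGR C s → IsGR C (.comm t s)
  | theta {t : Tm} : IsGR C t → IsGR C (.theta t)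
  | unl {t s : Tm} : IsGR C t → IsGR C s → IsGR C (.unl t s)
  | proj (n : ℕ) {t : Tm} : IsGR C t → IsGR C (.proj n t)
  | recs {E : ℕ → Tm} (i : ℕ) : GuardedSpec C E → IsGR C (.recs E i)

/-- Terms of APTC_τ with static localities and guarded linear recursion. -/
inductive IsGL (C : Ctx) : Tm → Prop where
  | evt (a : Evt) : IsGL C (.evt a)
  | delta : IsGL C .delta
  | plus {t s : Tm} : IsGL C t → IsGL C s → IsGL C (.plus t s)
  | seq {t s : Tm} : IsGL C t → IsGL C s → IsGL C (.seq t s)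
  | loc {t : Tm} (u : LocSeq) : IsGL C t → IsGL C (.loc u t)
  | between {t s : Tm} : IsGL C t → IsGL C s → IsGL C (.between t s)
  | par {t s : Tm} : IsGL C t → IsGL C s → IsGL C (.par t s)
  | lmerge {t s : Tm} : IsGL C t → IsGL C s → IsGL C (.lmerge t s)
  | comm {t s : Tm} : IsGL C t → IsGL C s → IsGL C (.comm t s)
  | theta {t : Tm} : IsGL C t → IsGL C (.theta t)
  | unl {t s : Tm} : IsGL C t → IsGL C s → IsGL C (.unl t s)
  | abst (I : Set Evt) {t : Tm} : IsGL C t → IsGL C (.abst I t)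
  | recs {E : ℕ → Tm} (i : ℕ) : GuardedLin C E → IsGL C (.recs E i)

/-! ### Clusters and CFAR -/

/-- Summands of a term (with respect to `+`). -/
inductive Summand : Tm → Tm → Prop where
  | self (t : Tm) : Summand t t
  | left {s t₁ : Tm} (t₂ : Tm) : Summand s t₁ → Summand s (.plus t₁ t₂)
  | right {s t₂ : Tm} (t₁ : Tm) : Summand s t₂ → Summand s (.plus t₁ t₂)

/-- The atomic events occurring in a term. -/
def evts : Tm → Set Evt
  | .evt a => {a}
  | .delta => ∅
  | .var _ => ∅
  | .plus t s => evts t ∪ evts s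
  | .seq t s => evts t ∪ evts s
  | .loc _ t => evts t
  | .between t s => evts t ∪ evts s
  | .par t s => evts t ∪ evts s
  | .lmerge t s => evts t ∪ evts s
  | .comm t s => evts t ∪ evts s
  | .theta t => evts t
  | .unl t s => evts t ∪ evts s
  | .proj _ t => evts t
  | .abst _ t => evts t
  | .recs _ _ => ∅

/-- One transition step `⟨Xᵢ|E⟩ ⟶ ⟨Xⱼ|E⟩` all of whose events lie in
`I ∪ {τ}`. -/
def ITrans (C : Ctx) (E : ℕ → Tm) (I : Set Evt) (i j : ℕ) : Prop :=
  ∃ l, Trans C (.recs E i) l (some (.recs E j)) ∧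
    ∀ p ∈ l, p.1 ∈ I ∨ p.1 = Evt.tau

/-- `Xᵢ` and `Xⱼ` are in the same cluster for `I`. -/
def SameCluster (C : Ctx) (E : ℕ → Tm) (I : Set Evt) (i j : ℕ) : Prop :=
  Relation.ReflTransGen (ITrans C E I) i j ∧
  Relation.ReflTransGen (ITrans C E I) j i

/-- The cluster of `X` for `I`. -/
def cluster (C : Ctx) (E : ℕ → Tm) (I : Set Evt) (X : ℕ) : Set ℕ :=
  {j | SameCluster C E I X j}

/-- `t` is an exit for the cluster `Cl`: a summand
`u₁::a₁ ⌊ ⋯ ⌊ uₖ::aₖ` or `(u₁::a₁ ⌊ ⋯ ⌊ uₖ::aₖ)·X` of the recursive equation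
of a variable in `Cl` such that, in the latter case, some `aₗ ∉ I ∪ {τ}` or
`X ∉ Cl`. -/
def IsExit (E : ℕ → Tm) (I : Set Evt) (Cl : Set ℕ) (t : Tm) : Prop :=
  (∃ i ∈ Cl, Summand t (E i)) ∧
  (MergeTm t ∨ ∃ m j, t = .seq m (.var j) ∧ MergeTm m ∧
    ((∃ a ∈ evts m, a ∉ I ∧ a ≠ Evt.tau) ∨ j ∉ Cl))

/-- `t₁ + ⋯ + tₙ` (the empty sum is `δ`). -/
def sumAll : List Tm → Tm
  | [] => .delta
  | [t] => t
  | t :: ts => .plus t (sumAll ts)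

/-- The axioms of APTC_τ with static localities and guarded linear recursion,
with CFAR: APTC^sl together with B1–B3, L13, TI1–TI6, L14–L16, RDP and the
Cluster Fair Abstraction Rule. -/
inductive AxT (C : Ctx) : Tm → Tm → Prop where
  | base {t s : Tm} : AxA C t s → AxT C t s
  | B1 (a : Evt) : AxT C (.seq (.evt a) (.evt Evt.tau)) (.evt a)
  | B2 (a : Evt) (x y : Tm) :
      AxT C (.seq (.evt a) (.plus (.seq (.evt Evt.tau) (.plus x y)) x))
            (.seq (.evt a) (.plus x y))
  | B3 (x : Tm) : AxT C (.lmerge x (.evt Evt.tau)) x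
  | L13 (u : LocSeq) : AxT C (.loc u (.evt Evt.tau)) (.evt Evt.tau)
  | TI1 {I : Set Evt} {a : Evt} : a ∉ I → AxT C (.abst I (.evt a)) (.evt a)
  | TI2 {I : Set Evt} {a : Evt} : a ∈ I →
      AxT C (.abst I (.evt a)) (.evt Evt.tau)
  | TI3 (I : Set Evt) : AxT C (.abst I .delta) .delta
  | TI4 (I : Set Evt) (x y : Tm) :
      AxT C (.abst I (.plus x y)) (.plus (.abst I x) (.abst I y))
  | TI5 (I : Set Evt) (x y : Tm) :
      AxT C (.abst I (.seq x y)) (.seq (.abst I x) (.abst I y))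
  | TI6 (I : Set Evt) (x y : Tm) :
      AxT C (.abst I (.lmerge x y)) (.lmerge (.abst I x) (.abst I y))
  | L14 (u : LocSeq) (I : Set Evt) (x : Tm) :
      AxT C (.loc u (.abst I x)) (.abst I (.loc u x))
  | L15 {I : Set Evt} {a : Evt} (u : LocSeq) : a ∉ I →
      AxT C (.abst I (.loc u (.evt a))) (.loc u (.evt a))
  | L16 {I : Set Evt} {a : Evt} (u : LocSeq) : a ∈ I →
      AxT C (.abst I (.loc u (.evt a))) (.evt Evt.tau)
  | rdp {E : ℕ → Tm} (i : ℕ) : GuardedLin C E →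
      AxT C (.recs E i) (subst (fun j => Tm.recs E j) (E i))
  | cfar {E : ℕ → Tm} {I : Set Evt} (X : ℕ) {ex : List Tm} :
      GuardedLin C E → Evt.tau ∉ I →
      (∀ t, t ∈ ex ↔ IsExit E I (cluster C E I X) t) →
      AxT C (.seq (.evt Evt.tau) (.abst I (.recs E X)))
            (.seq (.evt Evt.tau)
              (.abst I (sumAll (ex.map (subst fun j => Tm.recs E j)))))

/-- Derivability in APTC_τ with static localities and guarded linear
recursion, with CFAR. -/
def DerivT (C : Ctx) : Tm → Tm → Prop := EqCl (AxT C) (GuardedLin C)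

/-! ### Auxiliary development for soundness of BATC^sl -/

/-- Matching relation on resulting states: both terminated, or both terms
related by `DerivB`. -/
def SRel (r r' : S) : Prop :=
  (r = none ∧ r' = none) ∨ ∃ a b, r = some a ∧ r' = some b ∧ DerivB a b

theorem SRel.rfl' : ∀ r : S, SRel r r
  | none => Or.inl ⟨rfl, rfl⟩
  | some a => Or.inr ⟨a, a, rfl, rfl, EqCl.refl a⟩

theorem SRel.none' : SRel none none := Or.inl ⟨rfl, rfl⟩

theorem SRel.of {a b : Tm} (h : DerivB a b) : SRel (some a) (some b) :=
  Or.inr ⟨a, b, rfl, rfl, h⟩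

theorem SRel.none_left {r' : S} (h : SRel none r') : r' = none := by
  rcases h with ⟨_, rfl⟩ | ⟨a, b, ha, _, _⟩
  · rfl
  · exact absurd ha (by simp)

theorem SRel.some_left {a : Tm} {r' : S} (h : SRel (some a) r') :
    ∃ b, r' = some b ∧ DerivB a b := by
  rcases h with ⟨ha, _⟩ | ⟨a', b, ha, rfl, hd⟩
  · exact absurd ha (by simp)
  · injection ha with ha'; subst ha'; exact ⟨b, rfl, hd⟩

theorem SRel.trans' {r1 r2 r3 : S} (h1 : SRel r1 r2) (h2 : SRel r2 r3) :
    SRel r1 r3 := by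
  rcases h1 with ⟨rfl, rfl⟩ | ⟨a, b, rfl, rfl, hd⟩
  · rw [h2.none_left]; exact SRel.none'
  · obtain ⟨c, rfl, hd'⟩ := h2.some_left
    exact SRel.of (EqCl.trans hd hd')

theorem SRel.mapF {f g : Tm → Tm} (hfg : ∀ a b, DerivB a b → DerivB (f a) (g b))
    {r r' : S} (h : SRel r r') : SRel (r.map f) (r'.map g) := by
  rcases h with ⟨rfl, rfl⟩ | ⟨a, b, rfl, rfl, hd⟩
  · exact SRel.none'
  · exact SRel.of (hfg a b hd)

/-- One-directional transition matching with identical labels. -/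
def MatchT (C : Ctx) (cd : Tm → Evt → Prop) (t s : Tm) : Prop :=
  ∀ ⦃l r⦄, TA C cd t l r → ∃ r', TA C cd s l r' ∧ SRel r r'

theorem loc_inv {C : Ctx} {cd} {u t l r} (h : TA C cd (.loc u t) l r) :
    ∃ l₀ r₀, TA C cd t l₀ r₀ ∧ l = l₀.map (fun p => (p.1, u ++ p.2)) ∧
      r = r₀.map (Tm.loc u) := by
  cases h with
  | loc _ h0 => exact ⟨_, _, h0, rfl, rfl⟩

theorem match_plus {C : Ctx} {cd} {t t' s s'}
    (ht : MatchT C cd t t') (hs : MatchT C cd s s') :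
    MatchT C cd (.plus t s) (.plus t' s') := by
  intro l r h
  cases h with
  | plusL _ h0 => obtain ⟨r', h', e⟩ := ht h0; exact ⟨r', .plusL _ h', e⟩
  | plusR _ h0 => obtain ⟨r', h', e⟩ := hs h0; exact ⟨r', .plusR _ h', e⟩

theorem match_seq {C : Ctx} {cd} {t t' s s'}
    (ht : MatchT C cd t t') (hs : DerivB s s') :
    MatchT C cd (.seq t s) (.seq t' s') := by
  intro l r h
  cases h with
  | seqN _ h0 =>
      obtain ⟨r', h', e⟩ := ht h0
      rw [e.none_left] at h'
      exact ⟨some s', .seqN _ h', SRel.of hs⟩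
  | seqS _ h0 =>
      obtain ⟨r', h', e⟩ := ht h0
      obtain ⟨b, rfl, hd⟩ := e.some_left
      exact ⟨_, .seqS _ h', SRel.of (EqCl.seqC hd hs)⟩

theorem match_loc {C : Ctx} {cd} (u : LocSeq) {t t'} (ht : MatchT C cd t t') :
    MatchT C cd (.loc u t) (.loc u t') := by
  intro l r h
  obtain ⟨l₀, r₀, h0, rfl, rfl⟩ := loc_inv h
  obtain ⟨r', h', e⟩ := ht h0
  exact ⟨_, .loc u h', e.mapF (fun a b hd => EqCl.locC u hd)⟩

theorem match_par {C : Ctx} {cd} {t t' s s'}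
    (ht : MatchT C cd t t') (hs : MatchT C cd s s') :
    MatchT C cd (.par t s) (.par t' s') := by
  intro l r h
  cases h with
  | parNN h1 h2 =>
      obtain ⟨r1, h1', e1⟩ := ht h1; rw [e1.none_left] at h1'
      obtain ⟨r2, h2', e2⟩ := hs h2; rw [e2.none_left] at h2'
      exact ⟨none, .parNN h1' h2', SRel.none'⟩
  | parSN h1 h2 =>
      obtain ⟨r1, h1', e1⟩ := ht h1; obtain ⟨b, rfl, hd⟩ := e1.some_left
      obtain ⟨r2, h2', e2⟩ := hs h2; rw [e2.none_left] at h2'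
      exact ⟨_, .parSN h1' h2', SRel.of hd⟩
  | parNS h1 h2 =>
      obtain ⟨r1, h1', e1⟩ := ht h1; rw [e1.none_left] at h1'
      obtain ⟨r2, h2', e2⟩ := hs h2; obtain ⟨b, rfl, hd⟩ := e2.some_left
      exact ⟨_, .parNS h1' h2', SRel.of hd⟩
  | parSS h1 h2 =>
      obtain ⟨r1, h1', e1⟩ := ht h1; obtain ⟨b1, rfl, hd1⟩ := e1.some_left
      obtain ⟨r2, h2', e2⟩ := hs h2; obtain ⟨b2, rfl, hd2⟩ := e2.some_left
      exact ⟨_, .parSS h1' h2', SRel.of (EqCl.betweenC hd1 hd2)⟩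

theorem match_lmerge {C : Ctx} {cd} {t t' s s'}
    (ht : MatchT C cd t t') (hs : MatchT C cd s s') :
    MatchT C cd (.lmerge t s) (.lmerge t' s') := by
  intro l r h
  cases h with
  | lmNN h1 h2 hle =>
      obtain ⟨r1, h1', e1⟩ := ht h1; rw [e1.none_left] at h1'
      obtain ⟨r2, h2', e2⟩ := hs h2; rw [e2.none_left] at h2'
      exact ⟨none, .lmNN h1' h2' hle, SRel.none'⟩
  | lmSN h1 h2 hle =>
      obtain ⟨r1, h1', e1⟩ := ht h1; obtain ⟨b, rfl, hd⟩ := e1.some_left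
      obtain ⟨r2, h2', e2⟩ := hs h2; rw [e2.none_left] at h2'
      exact ⟨_, .lmSN h1' h2' hle, SRel.of hd⟩
  | lmNS h1 h2 hle =>
      obtain ⟨r1, h1', e1⟩ := ht h1; rw [e1.none_left] at h1'
      obtain ⟨r2, h2', e2⟩ := hs h2; obtain ⟨b, rfl, hd⟩ := e2.some_left
      exact ⟨_, .lmNS h1' h2' hle, SRel.of hd⟩
  | lmSS h1 h2 hle =>
      obtain ⟨r1, h1', e1⟩ := ht h1; obtain ⟨b1, rfl, hd1⟩ := e1.some_left
      obtain ⟨r2, h2', e2⟩ := hs h2; obtain ⟨b2, rfl, hd2⟩ := e2.some_left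
      exact ⟨_, .lmSS h1' h2' hle, SRel.of (EqCl.betweenC hd1 hd2)⟩

theorem match_comm {C : Ctx} {cd} {t t' s s'}
    (ht : MatchT C cd t t') (hs : MatchT C cd s s') :
    MatchT C cd (.comm t s) (.comm t' s') := by
  intro l r h
  cases h with
  | commNN h1 h2 hg =>
      obtain ⟨r1, h1', e1⟩ := ht h1; rw [e1.none_left] at h1'
      obtain ⟨r2, h2', e2⟩ := hs h2; rw [e2.none_left] at h2'
      exact ⟨none, .commNN h1' h2' hg, SRel.none'⟩
  | commSN h1 h2 hg =>
      obtain ⟨r1, h1', e1⟩ := ht h1; obtain ⟨b, rfl, hd⟩ := e1.some_left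
      obtain ⟨r2, h2', e2⟩ := hs h2; rw [e2.none_left] at h2'
      exact ⟨_, .commSN h1' h2' hg, SRel.of hd⟩
  | commNS h1 h2 hg =>
      obtain ⟨r1, h1', e1⟩ := ht h1; rw [e1.none_left] at h1'
      obtain ⟨r2, h2', e2⟩ := hs h2; obtain ⟨b, rfl, hd⟩ := e2.some_left
      exact ⟨_, .commNS h1' h2' hg, SRel.of hd⟩
  | commSS h1 h2 hg =>
      obtain ⟨r1, h1', e1⟩ := ht h1; obtain ⟨b1, rfl, hd1⟩ := e1.some_left
      obtain ⟨r2, h2', e2⟩ := hs h2; obtain ⟨b2, rfl, hd2⟩ := e2.some_left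
      exact ⟨_, .commSS h1' h2' hg, SRel.of (EqCl.betweenC hd1 hd2)⟩

theorem match_between {C : Ctx} {cd} {t t' s s'}
    (hp : MatchT C cd (.par t s) (.par t' s'))
    (hc : MatchT C cd (.comm t s) (.comm t' s')) :
    MatchT C cd (.between t s) (.between t' s') := by
  intro l r h
  cases h with
  | betw h0 =>
    cases h0 with
    | plusL _ h1 => obtain ⟨r', h', e⟩ := hp h1; exact ⟨r', .betw (.plusL _ h'), e⟩
    | plusR _ h1 => obtain ⟨r', h', e⟩ := hc h1; exact ⟨r', .betw (.plusR _ h'), e⟩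

theorem match_theta {C : Ctx} {cd} {t t'} (ht : MatchT C cd t t') :
    MatchT C cd (.theta t) (.theta t') := by
  intro l r h
  cases h with
  | theta₁ h0 hc =>
      obtain ⟨r', h', e⟩ := ht h0
      exact ⟨_, .theta₁ h' hc, e.mapF (fun a b hd => EqCl.thetaC hd)⟩
  | theta₂ h0 hc =>
      obtain ⟨r', h', e⟩ := ht h0
      exact ⟨_, .theta₂ h' hc, e.mapF (fun a b hd => EqCl.thetaC hd)⟩

theorem match_unl {C : Ctx} {cd} {t t' s s'}
    (ht : MatchT C cd t t') (hsb : ∀ e, cd s' e → cd s e) :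
    MatchT C cd (.unl t s) (.unl t' s') := by
  intro l r h
  cases h with
  | unl₁ h0 hn hc =>
      obtain ⟨r', h', e⟩ := ht h0
      exact ⟨r', .unl₁ h' (fun hx => hn (hsb _ hx)) hc, e⟩
  | unl₂ h0 hn hc hle =>
      obtain ⟨r', h', e⟩ := ht h0
      exact ⟨r', .unl₂ h' (fun hx => hn (hsb _ hx)) hc hle, e⟩
  | unl₃ h0 hn hc hle =>
      obtain ⟨r', h', e⟩ := ht h0
      exact ⟨r', .unl₃ h' (fun hx => hn (hsb _ hx)) hc hle, e⟩

theorem match_proj {C : Ctx} {cd} (n : ℕ) {t t'} (ht : MatchT C cd t t') :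
    MatchT C cd (.proj n t) (.proj n t') := by
  intro l r h
  cases h with
  | projN m h0 =>
      obtain ⟨r', h', e⟩ := ht h0; rw [e.none_left] at h'
      exact ⟨none, .projN m h', SRel.none'⟩
  | projS m h0 =>
      obtain ⟨r', h', e⟩ := ht h0; obtain ⟨b, rfl, hd⟩ := e.some_left
      exact ⟨_, .projS m h', SRel.of (EqCl.projC m hd)⟩

theorem match_abst {C : Ctx} {cd} (I : Set Evt) {t t'} (ht : MatchT C cd t t') :
    MatchT C cd (.abst I t) (.abst I t') := by
  intro l r h
  cases h with
  | abst _ h0 =>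
      obtain ⟨r', h', e⟩ := ht h0
      exact ⟨_, .abst I h', e.mapF (fun a b hd => EqCl.abstC I hd)⟩

theorem axB_match (C : Ctx) (cd : Tm → Evt → Prop) {t s : Tm} (ha : AxB t s) :
    MatchT C cd t s ∧ MatchT C cd s t := by
  cases ha with
  | A1 x y =>
      constructor <;>
      · intro l r h
        cases h with
        | plusL _ h0 => exact ⟨r, .plusR _ h0, SRel.rfl' r⟩
        | plusR _ h0 => exact ⟨r, .plusL _ h0, SRel.rfl' r⟩
  | A2 x y z =>
      constructor
      · intro l r h
        cases h with
        | plusL _ h0 =>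
            cases h0 with
            | plusL _ h1 => exact ⟨r, .plusL _ h1, SRel.rfl' r⟩
            | plusR _ h1 => exact ⟨r, .plusR _ (.plusL _ h1), SRel.rfl' r⟩
        | plusR _ h0 => exact ⟨r, .plusR _ (.plusR _ h0), SRel.rfl' r⟩
      · intro l r h
        cases h with
        | plusL _ h0 => exact ⟨r, .plusL _ (.plusL _ h0), SRel.rfl' r⟩
        | plusR _ h0 =>
            cases h0 with
            | plusL _ h1 => exact ⟨r, .plusL _ (.plusR _ h1), SRel.rfl' r⟩
            | plusR _ h1 => exact ⟨r, .plusR _ h1, SRel.rfl' r⟩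
  | A3 x =>
      constructor
      · intro l r h
        cases h with
        | plusL _ h0 => exact ⟨r, h0, SRel.rfl' r⟩
        | plusR _ h0 => exact ⟨r, h0, SRel.rfl' r⟩
      · intro l r h
        exact ⟨r, .plusL _ h, SRel.rfl' r⟩
  | A4 x y z =>
      constructor
      · intro l r h
        cases h with
        | seqN _ h0 =>
            cases h0 with
            | plusL _ h1 => exact ⟨_, .plusL _ (.seqN _ h1), SRel.rfl' _⟩
            | plusR _ h1 => exact ⟨_, .plusR _ (.seqN _ h1), SRel.rfl' _⟩
        | seqS _ h0 =>
            cases h0 with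
            | plusL _ h1 => exact ⟨_, .plusL _ (.seqS _ h1), SRel.rfl' _⟩
            | plusR _ h1 => exact ⟨_, .plusR _ (.seqS _ h1), SRel.rfl' _⟩
      · intro l r h
        cases h with
        | plusL _ h0 =>
            cases h0 with
            | seqN _ h1 => exact ⟨_, .seqN _ (.plusL _ h1), SRel.rfl' _⟩
            | seqS _ h1 => exact ⟨_, .seqS _ (.plusL _ h1), SRel.rfl' _⟩
        | plusR _ h0 =>
            cases h0 with
            | seqN _ h1 => exact ⟨_, .seqN _ (.plusR _ h1), SRel.rfl' _⟩
            | seqS _ h1 => exact ⟨_, .seqS _ (.plusR _ h1), SRel.rfl' _⟩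
  | A5 x y z =>
      constructor
      · intro l r h
        cases h with
        | seqN _ h0 => cases h0
        | seqS _ h0 =>
            cases h0 with
            | seqN _ h1 => exact ⟨_, .seqN _ h1, SRel.rfl' _⟩
            | seqS _ h1 =>
                exact ⟨_, .seqS _ h1, SRel.of (EqCl.ax (AxB.A5 _ _ _))⟩
      · intro l r h
        cases h with
        | seqN _ h0 => exact ⟨_, .seqS _ (.seqN _ h0), SRel.rfl' _⟩
        | seqS _ h0 =>
            exact ⟨_, .seqS _ (.seqS _ h0),
              SRel.of (EqCl.symm (EqCl.ax (AxB.A5 _ _ _)))⟩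
  | L1 x =>
      have hmap : ∀ l₀ : Lab,
          (l₀.map fun p => (p.1, ([] : LocSeq) ++ p.2)) = l₀ := by
        intro l₀; simp
      constructor
      · intro l r h
        obtain ⟨l₀, r₀, h0, rfl, rfl⟩ := loc_inv h
        rw [hmap]
        refine ⟨r₀, h0, ?_⟩
        cases r₀ with
        | none => exact SRel.none'
        | some a => exact SRel.of (EqCl.ax (AxB.L1 a))
      · intro l r h
        have h' := TA.loc (C := C) (cd := cd) ([] : LocSeq) h
        rw [hmap] at h'
        refine ⟨_, h', ?_⟩
        cases r with
        | none => exact SRel.none'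
        | some a => exact SRel.of (EqCl.symm (EqCl.ax (AxB.L1 a)))
  | L2 u x y =>
      constructor
      · intro l r h
        obtain ⟨l₀, r₀, h0, rfl, rfl⟩ := loc_inv h
        cases h0 with
        | seqN _ h1 =>
            exact ⟨_, .seqN _ (TA.loc u h1), SRel.rfl' _⟩
        | seqS _ h1 =>
            exact ⟨_, .seqS _ (TA.loc u h1),
              SRel.of (EqCl.ax (AxB.L2 u _ _))⟩
      · intro l r h
        cases h with
        | seqN _ h0 =>
            obtain ⟨l₀, r₀, h1, rfl, hr⟩ := loc_inv h0
            cases r₀ with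
            | some a => exact absurd hr (by simp)
            | none =>
                exact ⟨_, TA.loc u (.seqN _ h1), SRel.rfl' _⟩
        | seqS _ h0 =>
            obtain ⟨l₀, r₀, h1, rfl, hr⟩ := loc_inv h0
            cases r₀ with
            | none => exact absurd hr (by simp)
            | some a =>
                injection hr with hr'; subst hr'
                exact ⟨_, TA.loc u (.seqS _ h1),
                  SRel.of (EqCl.symm (EqCl.ax (AxB.L2 u _ _)))⟩
  | L3 u x y =>
      constructor
      · intro l r h
        obtain ⟨l₀, r₀, h0, rfl, rfl⟩ := loc_inv h
        cases h0 with
        | plusL _ h1 => exact ⟨_, .plusL _ (TA.loc u h1), SRel.rfl' _⟩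
        | plusR _ h1 => exact ⟨_, .plusR _ (TA.loc u h1), SRel.rfl' _⟩
      · intro l r h
        cases h with
        | plusL _ h0 =>
            obtain ⟨l₀, r₀, h1, rfl, rfl⟩ := loc_inv h0
            exact ⟨_, TA.loc u (.plusL _ h1), SRel.rfl' _⟩
        | plusR _ h0 =>
            obtain ⟨l₀, r₀, h1, rfl, rfl⟩ := loc_inv h0
            exact ⟨_, TA.loc u (.plusR _ h1), SRel.rfl' _⟩
  | L4 u v x =>
      have hmap : ∀ l₀ : Lab,
          ((l₀.map fun p => (p.1, v ++ p.2)).map fun p => (p.1, u ++ p.2)) =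
            l₀.map fun p => (p.1, (u ++ v) ++ p.2) := by
        intro l₀; simp [List.map_map, Function.comp, List.append_assoc]
      constructor
      · intro l r h
        obtain ⟨l₁, r₁, h0, rfl, rfl⟩ := loc_inv h
        obtain ⟨l₀, r₀, h1, rfl, rfl⟩ := loc_inv h0
        rw [hmap]
        refine ⟨_, TA.loc (u ++ v) h1, ?_⟩
        cases r₀ with
        | none => exact SRel.none'
        | some a => exact SRel.of (EqCl.ax (AxB.L4 u v a))
      · intro l r h
        obtain ⟨l₀, r₀, h1, rfl, rfl⟩ := loc_inv h
        have h' := TA.loc (C := C) (cd := cd) u (TA.loc v h1)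
        rw [hmap] at h'
        refine ⟨_, h', ?_⟩
        cases r₀ with
        | none => exact SRel.none'
        | some a => exact SRel.of (EqCl.symm (EqCl.ax (AxB.L4 u v a)))

theorem derivB_match (C : Ctx) (cd : Tm → Evt → Prop)
    (hcd : ∀ {a b : Tm}, DerivB a b → ∀ e, cd a e → cd b e) :
    ∀ {t s : Tm}, DerivB t s → MatchT C cd t s ∧ MatchT C cd s t := by
  intro t s h
  induction h with
  | ax ha => exact axB_match C cd ha
  | refl t =>
      exact ⟨fun l r h => ⟨r, h, SRel.rfl' r⟩, fun l r h => ⟨r, h, SRel.rfl' r⟩⟩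
  | symm _ ih => exact ⟨ih.2, ih.1⟩
  | trans h1 h2 ih1 ih2 =>
      refine ⟨fun l r h => ?_, fun l r h => ?_⟩
      · obtain ⟨r1, h1', e1⟩ := ih1.1 h
        obtain ⟨r2, h2', e2⟩ := ih2.1 h1'
        exact ⟨r2, h2', e1.trans' e2⟩
      · obtain ⟨r1, h1', e1⟩ := ih2.2 h
        obtain ⟨r2, h2', e2⟩ := ih1.2 h1'
        exact ⟨r2, h2', e1.trans' e2⟩
  | plusC h1 h2 ih1 ih2 => exact ⟨match_plus ih1.1 ih2.1, match_plus ih1.2 ih2.2⟩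
  | seqC h1 h2 ih1 ih2 =>
      exact ⟨match_seq ih1.1 h2, match_seq ih1.2 (EqCl.symm h2)⟩
  | locC u h1 ih => exact ⟨match_loc u ih.1, match_loc u ih.2⟩
  | betweenC h1 h2 ih1 ih2 =>
      exact ⟨match_between (match_par ih1.1 ih2.1) (match_comm ih1.1 ih2.1),
        match_between (match_par ih1.2 ih2.2) (match_comm ih1.2 ih2.2)⟩
  | parC h1 h2 ih1 ih2 => exact ⟨match_par ih1.1 ih2.1, match_par ih1.2 ih2.2⟩
  | lmergeC h1 h2 ih1 ih2 =>
      exact ⟨match_lmerge ih1.1 ih2.1, match_lmerge ih1.2 ih2.2⟩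
  | commC h1 h2 ih1 ih2 => exact ⟨match_comm ih1.1 ih2.1, match_comm ih1.2 ih2.2⟩
  | thetaC h1 ih => exact ⟨match_theta ih.1, match_theta ih.2⟩
  | unlC h1 h2 ih1 ih2 =>
      exact ⟨match_unl ih1.1 (hcd (EqCl.symm h2)),
        match_unl ih1.2 (hcd h2)⟩
  | projC n h1 ih => exact ⟨match_proj n ih.1, match_proj n ih.2⟩
  | abstC I h1 ih => exact ⟨match_abst I ih.1, match_abst I ih.2⟩
  | rsp i hG hys ih => exact hG.elim

theorem canDo0_invar (C : Ctx) :
    ∀ {a b : Tm}, DerivB a b → ∀ e, CanDo0 C a e → CanDo0 C b e := by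
  intro a b h e hc
  obtain ⟨u, r, hta⟩ := hc
  obtain ⟨r', h', _⟩ :=
    (derivB_match C (fun _ _ => False) (fun _ _ hf => hf) h).1 hta
  exact ⟨u, r', h'⟩

theorem derivB_trans_match (C : Ctx) {t s : Tm} (h : DerivB t s) :
    (∀ ⦃l r⦄, Trans C t l r → ∃ r', Trans C s l r' ∧ SRel r r') ∧
    (∀ ⦃l r⦄, Trans C s l r → ∃ r', Trans C t l r' ∧ SRel r r') :=
  derivB_match C (CanDo0 C) (fun hd => canDo0_invar C hd) h

/-- **Soundness of BATC with static localities modulo static location pomset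
bisimulation equivalence**: if `BATC^{sl} ⊢ x = y` then `x ∼ₚˢˡ y`. -/
theorem batc_soundness_pomset (C : Ctx) (x y : Tm) (hx : IsB x) (hy : IsB y)
    (h : DerivB x y) : pomBisim C x y := by
  refine ⟨fun φ P Q => (∀ p ∈ φ, p.1 = p.2) ∧
      ((P = none ∧ Q = none) ∨ ∃ a b, P = some a ∧ Q = some b ∧ DerivB a b),
    ?_, ?_⟩
  · rintro φ P Q ⟨hφ, hPQ⟩
    have hdiag : ∀ (l : Lab),
        ∀ p ∈ extend φ l l, (p : LocSeq × LocSeq).1 = p.2 := by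
      intro l p hp
      rcases hp with hp | ⟨i, a, b, hxa, hxb, rfl⟩
      · exact hφ p hp
      · rw [hxa] at hxb; injection hxb with hab; rw [hab]
    refine ⟨?_, ?_, ?_, ?_⟩
    · intro p hp q hq
      rw [hφ p hp, hφ q hq]
    · rcases hPQ with ⟨rfl, rfl⟩ | ⟨a, b, rfl, rfl, _⟩ <;> simp
    · rintro l₁ P' ⟨tP, rfl, htr⟩
      rcases hPQ with ⟨hP, _⟩ | ⟨a, b, ha, rfl, hab⟩
      · exact absurd hP (by simp)
      · injection ha with ha'; subst ha'
        obtain ⟨r', h', e⟩ := (derivB_trans_match C hab).1 htr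
        refine ⟨l₁, l₁, r', ⟨b, rfl, h'⟩, List.Perm.refl _, rfl,
          hdiag l₁, ?_⟩
        rcases e with ⟨rfl, rfl⟩ | ⟨a', b', rfl, rfl, hd⟩
        · exact Or.inl ⟨rfl, rfl⟩
        · exact Or.inr ⟨a', b', rfl, rfl, hd⟩
    · rintro l₂ Q' ⟨tQ, rfl, htr⟩
      rcases hPQ with ⟨_, hQ⟩ | ⟨a, b, rfl, hb, hab⟩
      · exact absurd hQ (by simp)
      · injection hb with hb'; subst hb'
        obtain ⟨r', h', e⟩ := (derivB_trans_match C hab).2 htr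
        refine ⟨l₂, l₂, r', ⟨a, rfl, h'⟩, List.Perm.refl _, rfl,
          hdiag l₂, ?_⟩
        rcases e with ⟨rfl, rfl⟩ | ⟨a', b', rfl, rfl, hd⟩
        · exact Or.inl ⟨rfl, rfl⟩
        · exact Or.inr ⟨b', a', rfl, rfl, EqCl.symm hd⟩
  · exact ⟨fun p hp => absurd hp (Set.notMem_empty p),
      Or.inr ⟨x, y, rfl, rfl, h⟩⟩

end APTCsl
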